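/- Let n ≥ 2, let 1 < α < 2, let κ : [-1,1] → [0,∞) be measurable with ∫_{S^{n-1}} κ(v·v') dv = 1 for each v' ∈ S^{n-1}, and let p be a path-length density with tail exponent α and coefficient d₀ > 0. With the scaling θ(ε) = ε^α, for every fixed ξ ∈ ℝⁿ \ {0} and v' ∈ S^{n-1}, the quantity Λ_ε(ξ,v') = ∫_{S^{n-1}} ∫₀^∞ κ(v'·v) p(s) (cos(ε (v·ξ) s) − 1)/θ(ε) ds dv converges as ε → 0 to −D̃₂ |ξ|^α, where D̃₂ = 2 d₀ ∫_{S^{n-1}} ∫₀^∞ κ(v·v') sin²(τ (v·e_ξ)/2) τ^{−(α+1)} dτ dv is finite and e_ξ = ξ/|ξ|. -/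

import Mathlib

open MeasureTheory Metric Filter Set
open scoped ENNReal

noncomputable section

/-- Euclidean space `ℝⁿ`. -/
abbrev Euc (n : ℕ) := EuclideanSpace ℝ (Fin n)

/-- The unit sphere `S^{n-1}` in `ℝⁿ`. -/
abbrev Sph (n : ℕ) := Metric.sphere (0 : Euc n) 1

/-- The normalized surface measure on the unit sphere (total mass `1`): the surface
measure divided by its total mass. -/
noncomputable def sphμ (n : ℕ) : Measure (Sph n) :=
  ((volume : Measure (Euc n)).toSphere Set.univ)⁻¹ • (volume : Measure (Euc n)).toSphere

/-- A path-length density: measurable, nonnegative, integrating to one on `(0,∞)`, with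
finite first moment. -/
def IsPathDensity (p : ℝ → ℝ) : Prop :=
  Measurable p ∧ (∀ s, 0 ≤ p s) ∧ (∫ s in Set.Ioi (0 : ℝ), p s = 1) ∧
    IntegrableOn (fun s => s * p s) (Set.Ioi (0 : ℝ))

/-- A normalized nonnegative angular kernel `κ` on `[-1,1]`:
`∫_{S^{n-1}} κ(v·v') dv = 1` for every `v'`. -/
def IsAngularKernel (n : ℕ) (κ : ℝ → ℝ) : Prop :=
  Measurable κ ∧ (∀ μ ∈ Set.Icc (-1 : ℝ) 1, 0 ≤ κ μ) ∧
    ∀ v' : Sph n, ∫ v, κ (inner ℝ (v : Euc n) (v' : Euc n)) ∂(sphμ n) = 1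

/-- The path-length density `p` has tail exponent `α` with coefficient `d₀`:
`p(s) = d₀ s^{−(α+1)}` for all `s > 1`. -/
def HasTailExponent (p : ℝ → ℝ) (α d₀ : ℝ) : Prop :=
  ∀ s : ℝ, 1 < s → p s = d₀ / s ^ (α + 1)

/-!
On `(1, ∞)` the density is exactly `d₀ s^{-(α+1)}`, so the substitution `τ = ε |v·ξ| s`
turns that part of the inner integral into
`d₀ (ε |v·ξ|)^α ∫_{ε|v·ξ|}^∞ (cos τ - 1) τ^{-(α+1)} dτ`; the last integral converges at `0`
because `α < 2` and at `∞` because `α > 0`. On `(0, 1]` the bound `|cos x - 1| ≤ x²/2` makes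
the contribution `O(ε²) = o(ε^α)`. Dominated convergence on the sphere (`|v·ξ| ≤ |ξ|`) and
`cos τ - 1 = -2 sin² (τ/2)` then identify the limit.
-/

open Real
open scoped Topology RealInnerProductSpace

theorem cos_sub_one_eq_neg_two_mul_sin_sq (x : ℝ) : cos x - 1 = -(2 * sin (x / 2) ^ 2) := by
  rw [sin_sq_eq_half_sub, mul_div_cancel₀ x two_ne_zero]
  ring

theorem abs_cos_sub_one_le_sq_div_two (x : ℝ) : |cos x - 1| ≤ x ^ 2 / 2 := by
  rw [abs_of_nonpos (sub_nonpos.2 (cos_le_one x))]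
  linarith [one_sub_sq_div_two_le_cos (x := x)]

theorem abs_cos_sub_one_le_two (x : ℝ) : |cos x - 1| ≤ 2 := by
  rw [abs_of_nonpos (sub_nonpos.2 (cos_le_one x))]
  linarith [neg_one_le_cos x]

section PowerKernel

variable {α : ℝ}

theorem integrableOn_Ioi_div_rpow_of_abs_le (hα₁ : 1 < α) (hα₂ : α < 2) {f : ℝ → ℝ}
    (hf : Measurable f) {C₁ C₂ : ℝ} (h_sq : ∀ τ, |f τ| ≤ C₁ * τ ^ 2) (h_bdd : ∀ τ, |f τ| ≤ C₂) :
    IntegrableOn (fun τ => f τ / τ ^ (α + 1)) (Ioi 0) := by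
  have hmeas : AEStronglyMeasurable (fun τ => f τ / τ ^ (α + 1)) volume :=
    (hf.div (measurable_id.pow_const _)).aestronglyMeasurable
  rw [← Ioc_union_Ioi_eq_Ioi zero_le_one]
  refine IntegrableOn.union ?_ ?_
  · refine Integrable.mono' ((intervalIntegral.intervalIntegrable_rpow' (r := 1 - α)
      (by linarith)).1.const_mul C₁) hmeas.restrict ?_
    filter_upwards [ae_restrict_mem measurableSet_Ioc] with τ hτ
    have hpow : τ ^ (1 - α) * τ ^ (α + 1) = τ ^ 2 := by
      rw [← rpow_add hτ.1, show 1 - α + (α + 1) = (2 : ℝ) by ring, rpow_two]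
    rw [norm_div, norm_of_nonneg (rpow_pos_of_pos hτ.1 _).le,
      div_le_iff₀ (rpow_pos_of_pos hτ.1 _), mul_assoc, hpow, Real.norm_eq_abs]
    exact h_sq τ
  · refine Integrable.mono' ((integrableOn_Ioi_rpow_of_lt (a := -(α + 1)) (by linarith)
      one_pos).const_mul C₂) hmeas.restrict ?_
    filter_upwards [ae_restrict_mem measurableSet_Ioi] with τ hτ
    have hτ0 : 0 < τ := one_pos.trans hτ
    rw [norm_div, norm_of_nonneg (rpow_pos_of_pos hτ0 _).le, rpow_neg hτ0.le, ← div_eq_mul_inv]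
    exact div_le_div_of_nonneg_right (h_bdd τ) (rpow_pos_of_pos hτ0 _).le

theorem setIntegral_Ioi_comp_mul_div_rpow (f : ℝ → ℝ) {c : ℝ} (hc : 0 < c) {t : ℝ}
    (ht : 0 ≤ t) :
    ∫ τ in Ioi t, f (c * τ) / τ ^ (α + 1) = c ^ α * ∫ τ in Ioi (c * t), f τ / τ ^ (α + 1) := by
  have hrescale : ∫ τ in Ioi t, f (c * τ) / τ ^ (α + 1) =
      ∫ τ in Ioi t, c ^ (α + 1) * (fun x => f x / x ^ (α + 1)) (c * τ) := by
    refine setIntegral_congr_fun measurableSet_Ioi fun τ hτ => ?_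
    have hτ0 : 0 < τ := ht.trans_lt hτ
    simp only [mul_rpow hc.le hτ0.le]
    field_simp
  rw [hrescale, integral_const_mul, integral_comp_mul_left_Ioi (fun x => f x / x ^ (α + 1)) t hc,
    smul_eq_mul, ← mul_assoc, rpow_add_one hc.ne' α]
  field_simp

theorem tendsto_setIntegral_Ioi_nhdsGT {g : ℝ → ℝ} (hg : IntegrableOn g (Ioi 0)) :
    Tendsto (fun c => ∫ τ in Ioi c, g τ) (𝓝[>] 0) (𝓝 (∫ τ in Ioi 0, g τ)) := by
  have hprim : Tendsto (fun c => ∫ τ in (0 : ℝ)..c, g τ) (𝓝[>] 0) (𝓝 0) := by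
    have h := intervalIntegral.continuousWithinAt_primitive (μ := volume) (a := 0) (b₁ := 0)
      (b₂ := 1) (measure_singleton 0) (by
        simpa using (intervalIntegrable_iff_integrableOn_Ioc_of_le zero_le_one).2
          (hg.mono_set Ioc_subset_Ioi_self))
    simpa using h.tendsto.mono_left (nhdsWithin_le_of_mem (Icc_mem_nhdsGT one_pos))
  have h := (tendsto_const_nhds (x := ∫ τ in Ioi 0, g τ)).sub hprim
  rw [sub_zero] at h
  refine h.congr' ?_
  filter_upwards [self_mem_nhdsWithin] with c (hc : 0 < c)
  rw [← intervalIntegral.integral_Ioi_sub_Ioi hg hc.le, sub_sub_cancel]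

theorem setIntegral_cos_sub_one_div_rpow :
    ∫ τ in Ioi 0, (cos τ - 1) / τ ^ (α + 1) =
      -2 * ∫ τ in Ioi 0, sin (τ / 2) ^ 2 / τ ^ (α + 1) := by
  rw [← integral_const_mul]
  refine integral_congr_ae (Eventually.of_forall fun τ => ?_)
  dsimp only
  rw [cos_sub_one_eq_neg_two_mul_sin_sq]
  ring

theorem setIntegral_sin_sq_mul_div_rpow (hα : α ≠ 0) (b : ℝ) :
    ∫ τ in Ioi 0, sin (τ * b / 2) ^ 2 / τ ^ (α + 1) =
      |b| ^ α * ∫ τ in Ioi 0, sin (τ / 2) ^ 2 / τ ^ (α + 1) := by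
  rcases eq_or_ne b 0 with rfl | hb
  · simp [zero_rpow hα]
  have h := setIntegral_Ioi_comp_mul_div_rpow (α := α) (fun x => sin (x / 2) ^ 2)
    (abs_pos.2 hb) le_rfl
  rw [mul_zero] at h
  rw [← h]
  refine integral_congr_ae (Eventually.of_forall fun τ => ?_)
  rcases abs_choice b with hb' | hb' <;> simp only [hb']
  · ring_nf
  · rw [show -b * τ / 2 = -(τ * b / 2) by ring, sin_neg, neg_sq]

theorem integrableOn_sin_sq_mul_div_rpow (hα₁ : 1 < α) (hα₂ : α < 2) (b : ℝ) :
    IntegrableOn (fun τ => sin (τ * b / 2) ^ 2 / τ ^ (α + 1)) (Ioi 0) :=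
  integrableOn_Ioi_div_rpow_of_abs_le hα₁ hα₂ (by fun_prop) (C₁ := b ^ 2 / 4) (C₂ := 1)
    (fun τ => by rw [abs_sq]; nlinarith [sin_sq_le_sq (x := τ * b / 2)])
    (fun τ => by rw [abs_sq]; exact sin_sq_le_one _)

theorem integrableOn_cos_sub_one_div_rpow (hα₁ : 1 < α) (hα₂ : α < 2) :
    IntegrableOn (fun τ => (cos τ - 1) / τ ^ (α + 1)) (Ioi 0) :=
  integrableOn_Ioi_div_rpow_of_abs_le hα₁ hα₂ (by fun_prop) (C₁ := 1 / 2) (C₂ := 2)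
    (fun τ => (abs_cos_sub_one_le_sq_div_two τ).trans_eq (by ring)) abs_cos_sub_one_le_two

end PowerKernel

theorem abs_inner_rpow_eq_norm_rpow_mul {E : Type*} [NormedAddCommGroup E]
    [InnerProductSpace ℝ E] (v ξ : E) (α : ℝ) :
    |inner ℝ v ξ| ^ α = ‖ξ‖ ^ α * |inner ℝ v (‖ξ‖⁻¹ • ξ)| ^ α := by
  have h : inner ℝ v ξ = ‖ξ‖ * inner ℝ v (‖ξ‖⁻¹ • ξ) := by
    rcases eq_or_ne ξ 0 with rfl | hξ
    · simp
    · rw [real_inner_smul_right, mul_inv_cancel_left₀ (norm_ne_zero_iff.2 hξ)]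
  rw [h, abs_mul, abs_norm, mul_rpow (norm_nonneg ξ) (abs_nonneg _)]

/-- The radial part of `Λ_ε`: `Λ_ε(ξ, v') = ∫ κ(v'·v) pathSymbol p α ε (v·ξ) dv`. -/
def pathSymbol (p : ℝ → ℝ) (α ε a : ℝ) : ℝ :=
  ∫ s in Ioi 0, p s * (cos (ε * a * s) - 1) / ε ^ α

theorem measurable_pathSymbol {p : ℝ → ℝ} (hp : Measurable p) (α ε : ℝ) :
    Measurable (pathSymbol p α ε) :=
  (StronglyMeasurable.integral_prod_right'
    (f := fun x : ℝ × ℝ => p x.2 * (cos (ε * x.1 * x.2) - 1) / ε ^ α)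
    (((hp.comp measurable_snd).mul (by fun_prop)).div_const _).stronglyMeasurable).measurable

namespace IsPathDensity

variable {p : ℝ → ℝ} {α d₀ : ℝ}

theorem integrableOn (hp : IsPathDensity p) : IntegrableOn p (Ioi 0) :=
  Integrable.of_integral_ne_zero (by rw [hp.2.2.1]; exact one_ne_zero)

theorem integrableOn_mul_cos_sub_one (hp : IsPathDensity p) (b : ℝ) :
    IntegrableOn (fun s => p s * (cos (b * s) - 1)) (Ioi 0) := by
  refine Integrable.mono' (hp.integrableOn.norm.mul_const 2)
    (hp.1.mul (by fun_prop)).aestronglyMeasurable (Eventually.of_forall fun s => ?_)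
  rw [norm_mul]
  exact mul_le_mul_of_nonneg_left (abs_cos_sub_one_le_two _) (norm_nonneg _)

theorem abs_setIntegral_Ioc_mul_cos_sub_one_le (hp : IsPathDensity p) (b : ℝ) :
    |∫ s in Ioc 0 1, p s * (cos (b * s) - 1)| ≤ b ^ 2 / 2 := by
  have hbound : ∀ᵐ s ∂volume.restrict (Ioc (0 : ℝ) 1),
      ‖p s * (cos (b * s) - 1)‖ ≤ b ^ 2 / 2 * p s := by
    filter_upwards [ae_restrict_mem measurableSet_Ioc] with s hs
    rw [norm_mul, Real.norm_of_nonneg (hp.2.1 s), mul_comm]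
    refine mul_le_mul_of_nonneg_right ?_ (hp.2.1 s)
    have hs_sq : s ^ 2 ≤ 1 := by nlinarith [hs.1, hs.2]
    calc |cos (b * s) - 1| ≤ (b * s) ^ 2 / 2 := abs_cos_sub_one_le_sq_div_two _
      _ ≤ b ^ 2 / 2 := by nlinarith [mul_le_mul_of_nonneg_left hs_sq (sq_nonneg b)]
  have hmass : ∫ s in Ioc 0 1, p s ≤ 1 :=
    hp.2.2.1 ▸ setIntegral_mono_set hp.integrableOn (Eventually.of_forall hp.2.1)
      Ioc_subset_Ioi_self.eventuallyLE
  calc |∫ s in Ioc 0 1, p s * (cos (b * s) - 1)|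
      ≤ ∫ s in Ioc 0 1, b ^ 2 / 2 * p s :=
        norm_integral_le_of_norm_le
          ((hp.integrableOn.mono_set Ioc_subset_Ioi_self).const_mul _) hbound
    _ ≤ b ^ 2 / 2 := by
        rw [integral_const_mul]
        exact mul_le_of_le_one_right (by positivity) hmass

theorem abs_setIntegral_Ioc_div_rpow_le (hp : IsPathDensity p) {ε : ℝ} (hε : 0 < ε) (a : ℝ) :
    |(∫ s in Ioc 0 1, p s * (cos (ε * a * s) - 1)) / ε ^ α| ≤ ε ^ (2 - α) * (a ^ 2 / 2) := by
  rw [abs_div, abs_of_pos (rpow_pos_of_pos hε α), div_le_iff₀ (rpow_pos_of_pos hε α),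
    mul_right_comm, ← rpow_add hε, sub_add_cancel, rpow_two]
  exact (hp.abs_setIntegral_Ioc_mul_cos_sub_one_le (ε * a)).trans_eq (by ring)

theorem pathSymbol_eq (hp : IsPathDensity p) (htail : HasTailExponent p α d₀) {ε a : ℝ}
    (hε : 0 < ε) (ha : a ≠ 0) :
    pathSymbol p α ε a = (∫ s in Ioc 0 1, p s * (cos (ε * a * s) - 1)) / ε ^ α +
      d₀ * |a| ^ α * ∫ τ in Ioi (ε * |a|), (cos τ - 1) / τ ^ (α + 1) := by
  have hI := hp.integrableOn_mul_cos_sub_one (ε * a)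
  have hscale := setIntegral_Ioi_comp_mul_div_rpow (α := α) (fun x => cos x - 1)
    (mul_pos hε (abs_pos.2 ha)) zero_le_one
  rw [mul_one] at hscale
  have htail_eq : ∫ s in Ioi 1, p s * (cos (ε * a * s) - 1) =
      d₀ * ((ε * |a|) ^ α * ∫ τ in Ioi (ε * |a|), (cos τ - 1) / τ ^ (α + 1)) := by
    rw [← hscale, ← integral_const_mul]
    refine setIntegral_congr_fun measurableSet_Ioi fun s hs => ?_
    rw [htail s hs, ← cos_abs (ε * a * s), abs_mul, abs_mul, abs_of_pos hε,
      abs_of_pos (one_pos.trans (mem_Ioi.1 hs))]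
    ring
  rw [pathSymbol, integral_div, ← Ioc_union_Ioi_eq_Ioi zero_le_one,
    setIntegral_union (Ioc_disjoint_Ioi le_rfl) measurableSet_Ioi
      (hI.mono_set Ioc_subset_Ioi_self) (hI.mono_set (Ioi_subset_Ioi zero_le_one)),
    add_div, htail_eq, mul_rpow hε.le (abs_nonneg a)]
  field_simp

theorem tendsto_pathSymbol (hp : IsPathDensity p) (htail : HasTailExponent p α d₀)
    (hα₁ : 1 < α) (hα₂ : α < 2) (a : ℝ) :
    Tendsto (fun ε => pathSymbol p α ε a) (𝓝[>] 0)
      (𝓝 (d₀ * |a| ^ α * ∫ τ in Ioi 0, (cos τ - 1) / τ ^ (α + 1))) := by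
  rcases eq_or_ne a 0 with rfl | ha
  · simp [pathSymbol, zero_rpow (by linarith : α ≠ 0)]
  have hlow : Tendsto (fun ε => (∫ s in Ioc 0 1, p s * (cos (ε * a * s) - 1)) / ε ^ α)
      (𝓝[>] 0) (𝓝 0) := by
    have hpow : Tendsto (fun ε : ℝ => ε ^ (2 - α) * (a ^ 2 / 2)) (𝓝[>] 0) (𝓝 0) := by
      simpa [zero_rpow (by linarith : 2 - α ≠ 0)] using
        ((continuousAt_rpow_const 0 (2 - α) (Or.inr (by linarith))).tendsto.mono_left
          nhdsWithin_le_nhds).mul_const (a ^ 2 / 2)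
    refine squeeze_zero_norm' ?_ hpow
    filter_upwards [self_mem_nhdsWithin] with ε hε
    exact hp.abs_setIntegral_Ioc_div_rpow_le hε a
  have hscale : Tendsto (fun ε => ε * |a|) (𝓝[>] 0) (𝓝[>] 0) := by
    refine tendsto_nhdsWithin_iff.2 ⟨?_, ?_⟩
    · simpa using (continuous_mul_const |a|).continuousWithinAt.tendsto (s := Ioi 0) (x := 0)
    · filter_upwards [self_mem_nhdsWithin] with ε (hε : 0 < ε)
      exact mul_pos hε (abs_pos.2 ha)
  have h := hlow.add (((tendsto_setIntegral_Ioi_nhdsGT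
    (integrableOn_cos_sub_one_div_rpow hα₁ hα₂)).comp hscale).const_mul (d₀ * |a| ^ α))
  rw [zero_add] at h
  refine h.congr' ?_
  filter_upwards [self_mem_nhdsWithin] with ε hε
  exact (hp.pathSymbol_eq htail hε ha).symm

theorem abs_pathSymbol_le (hp : IsPathDensity p) (htail : HasTailExponent p α d₀)
    (hα₁ : 1 < α) (hα₂ : α < 2) {ε : ℝ} (hε : ε ∈ Ioc 0 1) (a : ℝ) :
    |pathSymbol p α ε a| ≤
      a ^ 2 / 2 + |d₀| * |a| ^ α * ∫ τ in Ioi 0, |(cos τ - 1) / τ ^ (α + 1)| := by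
  have hg := (integrableOn_cos_sub_one_div_rpow hα₁ hα₂).abs
  rcases eq_or_ne a 0 with rfl | ha
  · simp [pathSymbol, zero_rpow (by linarith : α ≠ 0)]
  rw [hp.pathSymbol_eq htail hε.1 ha]
  refine (abs_add_le _ _).trans (add_le_add ?_ ?_)
  · calc _ ≤ ε ^ (2 - α) * (a ^ 2 / 2) := hp.abs_setIntegral_Ioc_div_rpow_le hε.1 a
      _ ≤ a ^ 2 / 2 :=
        mul_le_of_le_one_left (by positivity) (rpow_le_one hε.1.le hε.2 (by linarith))
  · rw [abs_mul, abs_mul, abs_of_nonneg (rpow_nonneg (abs_nonneg a) α)]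
    gcongr
    exact abs_integral_le_integral_abs.trans (setIntegral_mono_set hg
      (Eventually.of_forall fun _ => abs_nonneg _)
      (Ioi_subset_Ioi (mul_pos hε.1 (abs_pos.2 ha)).le).eventuallyLE)

theorem tendsto_integral_mul_pathSymbol {X : Type*} [MeasurableSpace X] {μ : Measure X}
    (hp : IsPathDensity p) (htail : HasTailExponent p α d₀) (hα₁ : 1 < α) (hα₂ : α < 2)
    {K A : X → ℝ} (hK : Integrable K μ) (hA : Measurable A) {M : ℝ} (hAM : ∀ x, |A x| ≤ M) :
    Tendsto (fun ε => ∫ x, K x * pathSymbol p α ε (A x) ∂μ) (𝓝[>] 0)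
      (𝓝 (∫ x, K x * (d₀ * |A x| ^ α * ∫ τ in Ioi 0, (cos τ - 1) / τ ^ (α + 1)) ∂μ)) := by
  refine tendsto_integral_filter_of_dominated_convergence
    (fun x => |K x| * (M ^ 2 / 2 + |d₀| * M ^ α * ∫ τ in Ioi 0, |(cos τ - 1) / τ ^ (α + 1)|))
    (Eventually.of_forall fun ε => hK.aestronglyMeasurable.mul
      ((measurable_pathSymbol hp.1 α ε).comp hA).aestronglyMeasurable)
    ?_ (hK.norm.mul_const _)
    (Eventually.of_forall fun x => (hp.tendsto_pathSymbol htail hα₁ hα₂ (A x)).const_mul (K x))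
  filter_upwards [Ioc_mem_nhdsGT one_pos] with ε hε
  refine Eventually.of_forall fun x => ?_
  have hAx := hAM x
  rw [norm_mul, Real.norm_eq_abs, Real.norm_eq_abs]
  refine mul_le_mul_of_nonneg_left ((hp.abs_pathSymbol_le htail hα₁ hα₂ hε (A x)).trans ?_)
    (abs_nonneg _)
  have hsq : A x ^ 2 ≤ M ^ 2 := sq_le_sq' (neg_le_of_abs_le hAx) (le_of_abs_le hAx)
  have hpow : |A x| ^ α ≤ M ^ α := rpow_le_rpow (abs_nonneg _) hAx (by linarith)
  exact add_le_add (by linarith) (mul_le_mul_of_nonneg_right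
    (mul_le_mul_of_nonneg_left hpow (abs_nonneg _)) (integral_nonneg fun _ => abs_nonneg _))

end IsPathDensity

theorem lambda_limit_heavy_tail_general
    (n : ℕ) (α : ℝ) (hα : 1 < α ∧ α < 2)
    (κ : ℝ → ℝ) (hκ : IsAngularKernel n κ)
    (p : ℝ → ℝ) (hp : IsPathDensity p)
    (d₀ : ℝ) (htail : HasTailExponent p α d₀)
    (ξ : Euc n) (v' : Sph n) :
    (∀ v : Sph n, IntegrableOn
        (fun τ => Real.sin (τ * inner ℝ (v : Euc n) (‖ξ‖⁻¹ • ξ) / 2) ^ 2 / τ ^ (α + 1))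
        (Set.Ioi (0 : ℝ))) ∧
    Tendsto
      (fun ε : ℝ => ∫ v : Sph n, ∫ s in Set.Ioi (0 : ℝ),
        κ (inner ℝ (v' : Euc n) (v : Euc n)) * p s *
          (Real.cos (ε * inner ℝ (v : Euc n) ξ * s) - 1) / ε ^ α ∂volume ∂(sphμ n))
      (nhdsWithin 0 (Set.Ioi (0 : ℝ)))
      (nhds (-(2 * d₀ *
        ∫ v : Sph n, κ (inner ℝ (v : Euc n) (v' : Euc n)) *
          ∫ τ in Set.Ioi (0 : ℝ),
            Real.sin (τ * inner ℝ (v : Euc n) (‖ξ‖⁻¹ • ξ) / 2) ^ 2 / τ ^ (α + 1) ∂volume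
          ∂(sphμ n)) * ‖ξ‖ ^ α)) := by
  obtain ⟨hα₁, hα₂⟩ := hα
  obtain ⟨-, -, hκ_one⟩ := hκ
  refine ⟨fun v => integrableOn_sin_sq_mul_div_rpow hα₁ hα₂ _, ?_⟩
  have hK : Integrable (fun v : Sph n => κ (inner ℝ (v' : Euc n) (v : Euc n))) (sphμ n) :=
    (Integrable.of_integral_ne_zero (by rw [hκ_one v']; exact one_ne_zero)).congr
      (Eventually.of_forall fun v => congrArg κ (real_inner_comm _ _))
  have hAM : ∀ v : Sph n, |inner ℝ (v : Euc n) ξ| ≤ ‖ξ‖ := fun v =>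
    (abs_real_inner_le_norm _ _).trans_eq (by rw [norm_eq_of_mem_sphere v, one_mul])
  have h := hp.tendsto_integral_mul_pathSymbol htail hα₁ hα₂ hK (by fun_prop) hAM
  have hlim : ∀ v : Sph n, κ (inner ℝ (v' : Euc n) (v : Euc n)) *
      (d₀ * |inner ℝ (v : Euc n) ξ| ^ α * ∫ τ in Ioi 0, (cos τ - 1) / τ ^ (α + 1)) =
      -(2 * d₀) * ‖ξ‖ ^ α * (κ (inner ℝ (v : Euc n) (v' : Euc n)) *
        ∫ τ in Ioi 0, sin (τ * inner ℝ (v : Euc n) (‖ξ‖⁻¹ • ξ) / 2) ^ 2 / τ ^ (α + 1)) := by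
    intro v
    rw [real_inner_comm (v' : Euc n), abs_inner_rpow_eq_norm_rpow_mul,
      setIntegral_cos_sub_one_div_rpow, setIntegral_sin_sq_mul_div_rpow (by linarith)]
    ring
  simp_rw [hlim, integral_const_mul] at h
  convert h using 2 with ε
  · refine integral_congr_ae (Eventually.of_forall fun v => ?_)
    simp only [pathSymbol, ← integral_const_mul]
    refine integral_congr_ae (Eventually.of_forall fun s => ?_)
    dsimp only
    ring
  · ring

/-- Proposition 4.5 (b2): pointwise limit `Λ_ε → −D̃₂ |ξ|^α` in the
heavy-tail case `1 < α < 2`, `θ(ε) = ε^α`. -/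
theorem lambda_limit_heavy_tail
    (n : ℕ) (hn : 2 ≤ n) (α : ℝ) (hα : 1 < α ∧ α < 2)
    (κ : ℝ → ℝ) (hκ : IsAngularKernel n κ)
    (p : ℝ → ℝ) (hp : IsPathDensity p)
    (d₀ : ℝ) (hd₀ : 0 < d₀) (htail : HasTailExponent p α d₀)
    (ξ : Euc n) (hξ : ξ ≠ 0) (v' : Sph n) :
    (∀ v : Sph n, IntegrableOn
        (fun τ => Real.sin (τ * inner ℝ (v : Euc n) (‖ξ‖⁻¹ • ξ) / 2) ^ 2 / τ ^ (α + 1))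
        (Set.Ioi (0 : ℝ))) ∧
    Tendsto
      (fun ε : ℝ => ∫ v : Sph n, ∫ s in Set.Ioi (0 : ℝ),
        κ (inner ℝ (v' : Euc n) (v : Euc n)) * p s *
          (Real.cos (ε * inner ℝ (v : Euc n) ξ * s) - 1) / ε ^ α ∂volume ∂(sphμ n))
      (nhdsWithin 0 (Set.Ioi (0 : ℝ)))
      (nhds (-(2 * d₀ *
        ∫ v : Sph n, κ (inner ℝ (v : Euc n) (v' : Euc n)) *
          ∫ τ in Set.Ioi (0 : ℝ),
            Real.sin (τ * inner ℝ (v : Euc n) (‖ξ‖⁻¹ • ξ) / 2) ^ 2 / τ ^ (α + 1) ∂volume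
          ∂(sphμ n)) * ‖ξ‖ ^ α)) :=
  lambda_limit_heavy_tail_general n α hα κ hκ p hp d₀ htail ξ v'
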